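/- Let (X,d) be a metric space. Then the set {(F,G) ∈ F*(X) × F*(X) : F ⊆ G} is closed in F*(X) × F*(X) when the first factor carries the lower topology and the second factor carries the upper Wijsman topology. In particular this set is closed for the product of the lower topology with the Wijsman topology, and for the product of the Wijsman topology with itself. -/

import Mathlib

open TopologicalSpace Set

/-- The set `F*(X)` of nonempty closed subsets of `X`. -/
abbrev NClosed (X : Type*) [TopologicalSpace X] := {F : Set X // IsClosed F ∧ F.Nonempty}

/-- Subbasis for the lower topology on `F*(X)`: the sets `{F | F ∩ U ≠ ∅}` for `U` open. -/
def lowerSets (X : Type*) [TopologicalSpace X] : Set (Set (NClosed X)) :=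
  {S : Set (NClosed X) | ∃ U : Set X, IsOpen U ∧ S = {F : NClosed X | (F.1 ∩ U).Nonempty}}

/-- The lower topology on `F*(X)`. -/
def lowerTopN (X : Type*) [TopologicalSpace X] : TopologicalSpace (NClosed X) :=
  TopologicalSpace.generateFrom (lowerSets X)

/-- Subbasis making each `F ↦ d(x, F)` lower semicontinuous. -/
def upperWijsSets (X : Type*) [MetricSpace X] : Set (Set (NClosed X)) :=
  {S : Set (NClosed X) |
    ∃ (x : X) (r : ℝ), S = {F : NClosed X | r < Metric.infDist x F.1}}

/-- The upper Wijsman topology on `F*(X)`: the coarsest topology making each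
`F ↦ d(x, F)` lower semicontinuous. -/
def upperWijsTop (X : Type*) [MetricSpace X] : TopologicalSpace (NClosed X) :=
  TopologicalSpace.generateFrom (upperWijsSets X)

/-- Subbasis making each `F ↦ d(x, F)` continuous. -/
def wijsSets (X : Type*) [MetricSpace X] : Set (Set (NClosed X)) :=
  {S : Set (NClosed X) |
    ∃ (x : X) (U : Set ℝ), IsOpen U ∧
      S = (fun F : NClosed X => Metric.infDist x F.1) ⁻¹' U}

/-- The Wijsman topology on `F*(X)`: the coarsest topology making each `F ↦ d(x, F)`
continuous. -/
def wijsTop (X : Type*) [MetricSpace X] : TopologicalSpace (NClosed X) :=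
  TopologicalSpace.generateFrom (wijsSets X)

/-!
If `F ⊄ G` with `G` closed, pick `x ∈ F \ G` and `r := d(x, G) / 2 > 0`: then every `F'` meeting
`B(x, r)` and every `G'` with `d(x, G') > r` still satisfy `F' ⊄ G'`, because a point of
`F' ∩ B(x, r)` lies at distance `< r` from `x`. These pairs form a basic open set of the product of
the lower and upper Wijsman topologies. The Wijsman topology is finer than both of them, which
gives the other two statements.
-/

open Topology Metric

section

variable {X : Type*}

lemma isOpen_lowerTopN_setOf_inter_nonempty [TopologicalSpace X] {U : Set X} (hU : IsOpen U) :
    IsOpen[lowerTopN X] {F : NClosed X | (F.1 ∩ U).Nonempty} :=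
  .basic _ ⟨U, hU, rfl⟩

variable [MetricSpace X]

lemma isOpen_upperWijsTop_setOf_lt_infDist (x : X) (r : ℝ) :
    IsOpen[upperWijsTop X] {F : NClosed X | r < infDist x F.1} :=
  .basic _ ⟨x, r, rfl⟩

lemma isOpen_wijsTop_preimage_infDist (x : X) {U : Set ℝ} (hU : IsOpen U) :
    IsOpen[wijsTop X] ((fun F : NClosed X => infDist x F.1) ⁻¹' U) :=
  .basic _ ⟨x, U, hU, rfl⟩

lemma wijsTop_le_upperWijsTop : wijsTop X ≤ upperWijsTop X :=
  le_generateFrom <| by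
    rintro _ ⟨x, r, rfl⟩
    exact isOpen_wijsTop_preimage_infDist x isOpen_Ioi

lemma inter_nonempty_iff_exists_infDist_lt {U F : Set X} (hU : IsOpen U) (hF : F.Nonempty) :
    (F ∩ U).Nonempty ↔ ∃ x r, ball x r ⊆ U ∧ infDist x F < r := by
  constructor
  · rintro ⟨y, hyF, hyU⟩
    obtain ⟨r, hr, hball⟩ := Metric.isOpen_iff.mp hU y hyU
    exact ⟨y, r, hball, by rwa [infDist_zero_of_mem hyF]⟩
  · rintro ⟨x, r, hball, hlt⟩
    obtain ⟨y, hyF, hxy⟩ := (infDist_lt_iff hF).mp hlt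
    exact ⟨y, hyF, hball (mem_ball'.mpr hxy)⟩

lemma wijsTop_le_lowerTopN : wijsTop X ≤ lowerTopN X :=
  le_generateFrom <| by
    rintro _ ⟨U, hU, rfl⟩
    have hunion : {F : NClosed X | (F.1 ∩ U).Nonempty} =
        ⋃ (x : X) (r : ℝ) (_ : ball x r ⊆ U), (fun F : NClosed X => infDist x F.1) ⁻¹' Iio r := by
      ext F
      simpa only [mem_ofPred_eq, mem_iUnion, exists_prop, mem_preimage, mem_Iio] using
        inter_nonempty_iff_exists_infDist_lt hU F.2.2
    let := wijsTop X
    rw [hunion]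
    exact isOpen_iUnion fun x => isOpen_iUnion fun r => isOpen_iUnion fun _ =>
      isOpen_wijsTop_preimage_infDist x isOpen_Iio

lemma not_subset_iff_exists_inter_ball_nonempty_lt_infDist {F G : Set X} (hG : IsClosed G)
    (hG' : G.Nonempty) :
    ¬F ⊆ G ↔ ∃ x r, (F ∩ ball x r).Nonempty ∧ r < infDist x G := by
  constructor
  · intro h
    obtain ⟨x, hxF, hxG⟩ := not_subset.mp h
    have hpos : 0 < infDist x G := (hG.notMem_iff_infDist_pos hG').mp hxG
    exact ⟨x, infDist x G / 2, ⟨x, hxF, mem_ball_self (half_pos hpos)⟩, half_lt_self hpos⟩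
  · rintro ⟨x, r, ⟨y, hyF, hxy⟩, hr⟩ hsub
    have := infDist_le_dist_of_mem (x := x) (hsub hyF)
    linarith [mem_ball'.mp hxy]

lemma isClosed_setOf_subset_lowerTopN_upperWijsTop :
    IsClosed[@instTopologicalSpaceProd _ _ (lowerTopN X) (upperWijsTop X)]
      {p : NClosed X × NClosed X | p.1.1 ⊆ p.2.1} := by
  let : TopologicalSpace (NClosed X × NClosed X) :=
    @instTopologicalSpaceProd _ _ (lowerTopN X) (upperWijsTop X)
  have hunion : {p : NClosed X × NClosed X | p.1.1 ⊆ p.2.1}ᶜ =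
      ⋃ (x : X) (r : ℝ),
        {F : NClosed X | (F.1 ∩ ball x r).Nonempty} ×ˢ {G : NClosed X | r < infDist x G.1} := by
    ext p
    simpa only [mem_compl_iff, mem_ofPred_eq, mem_iUnion, mem_prod] using
      not_subset_iff_exists_inter_ball_nonempty_lt_infDist p.2.2.1 p.2.2.2
  rw [← isOpen_compl_iff, hunion]
  exact isOpen_iUnion fun x => isOpen_iUnion fun r =>
    @IsOpen.prod _ _ (lowerTopN X) (upperWijsTop X) _ _
      (isOpen_lowerTopN_setOf_inter_nonempty isOpen_ball)
      (isOpen_upperWijsTop_setOf_lt_infDist x r)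

end

/-- For a metric space `(X, d)`, the set `{(F, G) ∈ F*(X) × F*(X) | F ⊆ G}` is closed for the
product of the lower topology with the upper Wijsman topology; in particular for the product of
the lower topology with the Wijsman topology, and for the product of the Wijsman topology with
itself. -/
theorem isClosed_subset_rel_wijsman (X : Type*) [MetricSpace X] :
    @IsClosed (NClosed X × NClosed X)
      (@instTopologicalSpaceProd _ _ (lowerTopN X) (upperWijsTop X))
      {p : NClosed X × NClosed X | p.1.1 ⊆ p.2.1} ∧
    @IsClosed (NClosed X × NClosed X)
      (@instTopologicalSpaceProd _ _ (lowerTopN X) (wijsTop X))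
      {p : NClosed X × NClosed X | p.1.1 ⊆ p.2.1} ∧
    @IsClosed (NClosed X × NClosed X)
      (@instTopologicalSpaceProd _ _ (wijsTop X) (wijsTop X))
      {p : NClosed X × NClosed X | p.1.1 ⊆ p.2.1} := by
  have hclosed := isClosed_setOf_subset_lowerTopN_upperWijsTop (X := X)
  exact ⟨hclosed, hclosed.mono (prod_mono le_rfl wijsTop_le_upperWijsTop),
    hclosed.mono (prod_mono wijsTop_le_lowerTopN wijsTop_le_upperWijsTop)⟩
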